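/- Let ρ ∈ M_n(ℂ) be positive definite, let 𝒜 be a real *-subalgebra of M_n(ℂ), let Π be the orthogonal projection of M_n(ℂ) onto 𝒜 with respect to the real Hilbert–Schmidt inner product, and set ρ₀ := Π(ρ). Then the following are equivalent: (i) there exists a real conditional expectation α onto 𝒜 such that Re Tr(ρ B) = Re Tr(ρ α(B)) for all B ∈ M_n(ℂ); (ii) ρ₀ is positive definite (in particular invertible) and ρ A ρ⁻¹ = ρ₀ A ρ₀⁻¹ for every A ∈ 𝒜; (iii) ρ A ρ⁻¹ ∈ 𝒜 for every A ∈ 𝒜. -/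

import Mathlib

open Matrix Complex Filter
open scoped ComplexOrder

/-- `Mat n` is the algebra of `n × n` complex matrices. -/
abbrev Mat (n : ℕ) := Matrix (Fin n) (Fin n) ℂ

/-- A real `*`-subalgebra of `M_n(ℂ)`: a real-linear subspace containing the identity,
closed under matrix multiplication and conjugate transpose. -/
def IsRealStarSubalgebra {n : ℕ} (𝒜 : Set (Mat n)) : Prop :=
  (∀ A ∈ 𝒜, ∀ B ∈ 𝒜, A + B ∈ 𝒜) ∧
  (∀ (r : ℝ), ∀ A ∈ 𝒜, r • A ∈ 𝒜) ∧
  (∀ A ∈ 𝒜, ∀ B ∈ 𝒜, A * B ∈ 𝒜) ∧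
  (∀ A ∈ 𝒜, Aᴴ ∈ 𝒜) ∧
  (1 : Mat n) ∈ 𝒜

/-- A real positive map: a real-linear map sending positive semidefinite matrices
to positive semidefinite matrices. -/
def IsRealPositiveMap {n : ℕ} (α : Mat n →ₗ[ℝ] Mat n) : Prop :=
  ∀ B : Mat n, B.PosSemidef → (α B).PosSemidef

/-- A real conditional expectation onto `𝒜`: a real positive map with range in `𝒜`
satisfying the module property `α(AB) = A·α(B)` for `A ∈ 𝒜`. -/
def IsRealCondExp {n : ℕ} (𝒜 : Set (Mat n)) (α : Mat n →ₗ[ℝ] Mat n) : Prop :=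
  IsRealPositiveMap α ∧ (∀ B : Mat n, α B ∈ 𝒜) ∧
  (∀ A ∈ 𝒜, ∀ B : Mat n, α (A * B) = A * α B)

/-!
The orthogonal projection `P` onto `𝒜` is a left `𝒜`-module map, self-adjoint for the trace
pairing, and positive: for Hermitian `Y = P X` with `X ≥ 0` the negative part `Y⁻` lies in `𝒜`,
so `0 ≤ Re Tr (Y⁻ X) = Re Tr (Y⁻ Y) = -Re Tr (Y⁻ Y⁻)` forces `Y⁻ = 0`. Choosing `c > 0` with
`ρ ≥ c • 1` then gives `ρ₀ = P ρ ≥ c • 1`, so `ρ₀` is positive definite, and condition (ii) says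
that `F = ρ₀⁻¹ ρ` commutes with `𝒜`.

(ii) ⇒ (i): `F ≥ 0`, and `√F` still commutes with `𝒜`, so `B ↦ P (√F B √F)` is a conditional
expectation; it preserves `ρ` because `√F ρ₀ √F = ρ`. (ii) ⇒ (iii) because `ρ₀⁻¹ ∈ 𝒜`.
(iii) ⇒ (ii): `Z = ρ A ρ⁻¹ - ρ₀ A ρ₀⁻¹ ∈ 𝒜` satisfies `Re Tr (ρ B Z) = 0` for all `B ∈ 𝒜`, and
`B = Zᴴ` forces `Z = 0`.

(i) ⇒ (ii): invariance of `ρ` and the module property give `Re Tr (G α(B)) = Re Tr (K G B)` for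
`G ∈ 𝒜`, where `K = ρ ρ₀⁻¹`. Positivity of `α` turns this into `K G + (K G)ᴴ ≥ 0` for `G ≥ 0` in
`𝒜` and `K T + (K T)ᴴ = 0` for skew-Hermitian `T ∈ 𝒜`. Testing the first condition with
`G = (H - λ)ᴴ (H - λ)`, whose kernel is the `λ`-eigenspace of a Hermitian `H ∈ 𝒜`, shows that `Kᴴ`
preserves the eigenspaces of `H` and so commutes with `H`. For `H = ρ₀` this gives `K = Kᴴ = F`,
and the skew-Hermitian condition then covers the rest of `𝒜`.
-/

open scoped MatrixOrder

namespace Matrix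

variable {ι : Type*} [Fintype ι]

theorem re_trace_mul_conjTranspose (A B : Matrix ι ι ℂ) :
    ((A * Bᴴ).trace).re = ((Aᴴ * B).trace).re := by
  rw [← conjTranspose_conjTranspose A, ← conjTranspose_mul, trace_conjTranspose,
    conjTranspose_conjTranspose, trace_mul_comm, Complex.star_def, Complex.conj_re]

theorem eq_zero_of_re_trace_conjTranspose_mul_self_eq_zero {A : Matrix ι ι ℂ}
    (h : ((Aᴴ * A).trace).re = 0) : A = 0 := by
  have hnonneg : 0 ≤ (Aᴴ * A).trace := (posSemidef_conjTranspose_mul_self A).trace_nonneg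
  exact trace_conjTranspose_mul_self_eq_zero_iff.mp
    (Complex.ext h (Complex.nonneg_iff.mp hnonneg).2.symm)

theorem PosSemidef.trace_mul_nonneg [DecidableEq ι] {A B : Matrix ι ι ℂ} (hA : A.PosSemidef)
    (hB : B.PosSemidef) : 0 ≤ (A * B).trace := by
  rw [← CFC.sqrt_mul_sqrt_self A hA.nonneg, mul_assoc, trace_mul_comm, mul_assoc]
  have hsa : (CFC.sqrt A)ᴴ = CFC.sqrt A := (CFC.sqrt_nonneg A).isSelfAdjoint
  have := hB.conjTranspose_mul_mul_same (CFC.sqrt A)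
  rw [hsa, mul_assoc] at this
  exact this.trace_nonneg

theorem re_trace_mul_eq_zero_of_conjTranspose_eq_neg {S H : Matrix ι ι ℂ} (hS : Sᴴ = -S)
    (hH : H.IsHermitian) : ((S * H).trace).re = 0 := by
  have h : star (S * H).trace = -(S * H).trace := by
    rw [← trace_conjTranspose, conjTranspose_mul, hS, hH.eq, mul_neg, trace_neg, trace_mul_comm]
  have h' := congrArg Complex.re h
  simp only [Complex.star_def, Complex.conj_re, Complex.neg_re] at h'
  linarith

theorem posSemidef_add_conjTranspose_of_re_trace_mul_nonneg {M : Matrix ι ι ℂ}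
    (h : ∀ B : Matrix ι ι ℂ, B.PosSemidef → 0 ≤ ((M * B).trace).re) :
    (M + Mᴴ).PosSemidef := by
  refine .of_dotProduct_mulVec_nonneg (isHermitian_add_transpose_self M) fun v => ?_
  have hv := h _ (posSemidef_vecMulVec_self_star v)
  rw [mul_vecMulVec, trace_vecMulVec] at hv
  have hz : star v ⬝ᵥ Mᴴ *ᵥ v = star (star v ⬝ᵥ M *ᵥ v) := by
    rw [dotProduct_mulVec, ← star_mulVec, star_dotProduct]
  rw [add_mulVec, dotProduct_add, hz, Complex.star_def, Complex.add_conj, dotProduct_comm]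
  exact_mod_cast mul_nonneg zero_le_two hv

theorem add_conjTranspose_eq_zero_of_re_trace_mul_eq_zero {M : Matrix ι ι ℂ}
    (h : ∀ B : Matrix ι ι ℂ, B.PosSemidef → ((M * B).trace).re = 0) : M + Mᴴ = 0 := by
  have hM := posSemidef_add_conjTranspose_of_re_trace_mul_nonneg fun B hB => (h B hB).ge
  have hM' := posSemidef_add_conjTranspose_of_re_trace_mul_nonneg (M := -M) fun B hB => by
    simp [h B hB]
  rw [conjTranspose_neg, ← neg_add] at hM'
  exact le_antisymm (neg_nonneg.mp hM'.nonneg) hM.nonneg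

theorem PosDef.eq_zero_of_re_trace_mul_conjTranspose_mul_self_eq_zero [DecidableEq ι]
    {ρ Z : Matrix ι ι ℂ} (hρ : ρ.PosDef) (h : ((ρ * (Zᴴ * Z)).trace).re = 0) : Z = 0 := by
  set R := CFC.sqrt ρ
  have hR : Rᴴ = R := (CFC.sqrt_nonneg ρ).isSelfAdjoint
  have hRunit : IsUnit R :=
    CFC.isUnit_sqrt_iff_isStrictlyPositive.mpr (isStrictlyPositive_iff_posDef.mpr hρ)
  have hZR : (Z * R)ᴴ * (Z * R) = R * (Zᴴ * Z) * R := by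
    rw [conjTranspose_mul, hR]; simp only [mul_assoc]
  refine (hRunit.mul_left_eq_zero).mp (eq_zero_of_re_trace_conjTranspose_mul_self_eq_zero ?_)
  rwa [hZR, trace_mul_comm, ← mul_assoc, CFC.sqrt_mul_sqrt_self ρ hρ.posSemidef.nonneg]

theorem PosDef.exists_pos_posSemidef_sub_smul_one [DecidableEq ι] {ρ : Matrix ι ι ℂ}
    (hρ : ρ.PosDef) : ∃ c : ℝ, 0 < c ∧ (ρ - c • 1).PosSemidef := by
  have hev : ∀ᶠ c in nhdsWithin (0 : ℝ) (Set.Ioi 0), ∀ i, c ≤ hρ.1.eigenvalues i :=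
    Filter.eventually_all.2 fun i =>
      eventually_nhdsWithin_of_eventually_nhds (eventually_le_nhds (hρ.eigenvalues_pos i))
  obtain ⟨c, hle, hc⟩ := (hev.and self_mem_nhdsWithin).exists
  refine ⟨c, hc, ?_⟩
  rw [← Algebra.algebraMap_eq_smul_one, ← nonneg_iff_posSemidef, sub_nonneg,
    algebraMap_le_iff_le_spectrum (ha := hρ.1), hρ.1.spectrum_real_eq_range_eigenvalues]
  rintro _ ⟨i, rfl⟩
  exact hle i

theorem trace_mul_mul_conj [DecidableEq ι] {σ : Matrix ι ι ℂ} (hσ : IsUnit σ.det)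
    (A B : Matrix ι ι ℂ) : (σ * B * (σ * A * σ⁻¹)).trace = (σ * A * B).trace := by
  rw [trace_mul_comm, mul_assoc (σ * A), ← mul_assoc σ⁻¹, nonsing_inv_mul _ hσ, one_mul]

theorem mul_mul_nonsing_inv_eq_iff_commute [DecidableEq ι] {ρ σ A : Matrix ι ι ℂ}
    (hρ : IsUnit ρ.det) (hσ : IsUnit σ.det) : ρ * A * ρ⁻¹ = σ * A * σ⁻¹ ↔ Commute (σ⁻¹ * ρ) A := by
  constructor
  · intro h
    calc σ⁻¹ * ρ * A = σ⁻¹ * (ρ * A * ρ⁻¹) * ρ := by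
          simp only [mul_assoc, nonsing_inv_mul _ hρ, mul_one]
      _ = A * (σ⁻¹ * ρ) := by
          rw [h]; simp only [← mul_assoc, nonsing_inv_mul _ hσ, one_mul]
  · intro h
    calc ρ * A * ρ⁻¹ = σ * (σ⁻¹ * ρ * A) * ρ⁻¹ := by
          simp only [← mul_assoc, mul_nonsing_inv _ hσ, one_mul]
      _ = σ * A * σ⁻¹ := by
          rw [h.eq]; simp only [mul_assoc, mul_nonsing_inv _ hρ, mul_one]

theorem IsHermitian.mulVec_conjTranspose_mulVec_eq_zero {G X : Matrix ι ι ℂ} {v : ι → ℂ}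
    (hG : G.IsHermitian) (hM : (X * G + G * Xᴴ).PosSemidef) (hv : G *ᵥ v = 0) :
    G *ᵥ Xᴴ *ᵥ v = 0 := by
  have hvG : star v ᵥ* G = 0 := by
    rw [← hG.eq, ← star_mulVec, hv, star_zero]
  have hquad : star v ⬝ᵥ (X * G + G * Xᴴ) *ᵥ v = 0 := by
    rw [add_mulVec, ← mulVec_mulVec, ← mulVec_mulVec, hv, mulVec_zero, dotProduct_add,
      dotProduct_zero, dotProduct_mulVec, hvG, zero_dotProduct, zero_add]
  have hker := (hM.dotProduct_mulVec_zero_iff v).mp hquad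
  rwa [add_mulVec, ← mulVec_mulVec, hv, mulVec_zero, zero_add, ← mulVec_mulVec] at hker

theorem IsHermitian.commute_of_mapsTo_eigenvectors [DecidableEq ι] {H F : Matrix ι ι ℂ}
    (hH : H.IsHermitian)
    (hF : ∀ (c : ℝ) (v : ι → ℂ), H *ᵥ v = c • v → H *ᵥ F *ᵥ v = c • F *ᵥ v) :
    Commute H F := by
  set U : Matrix ι ι ℂ := (hH.eigenvectorUnitary : Matrix ι ι ℂ)
  have hU : (H * F - F * H) * U = 0 := by
    refine ext_of_mulVec_single fun j => ?_
    have hj := hH.mulVec_eigenvectorBasis j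
    rw [← mulVec_mulVec, eigenvectorUnitary_mulVec, sub_mulVec, ← mulVec_mulVec,
      ← mulVec_mulVec, hF _ _ hj, hj, mulVec_smul, sub_self, zero_mulVec]
  have hUU : U * star U = 1 := Unitary.coe_mul_star_self hH.eigenvectorUnitary
  rw [commute_iff_eq, ← sub_eq_zero, ← mul_one (H * F - F * H), ← hUU, ← mul_assoc, hU, zero_mul]

end Matrix

namespace StarSubalgebra

variable {ι : Type*} [Fintype ι] [DecidableEq ι] (S : StarSubalgebra ℝ (Matrix ι ι ℂ))

instance isClosed_matrix : IsClosed (S : Set (Matrix ι ι ℂ)) :=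
  S.toSubalgebra.toSubmodule.closed_of_finiteDimensional

variable {S}

theorem commute_of_commute_isHermitian_of_commute_skew {X : Matrix ι ι ℂ}
    (hH : ∀ H ∈ S, H.IsHermitian → Commute X H) (hT : ∀ T ∈ S, Tᴴ = -T → Commute X T)
    {A : Matrix ι ι ℂ} (hA : A ∈ S) : Commute X A := by
  have hA' : Aᴴ ∈ S := star_mem hA
  have hsum := (hH _ (add_mem hA hA') (Matrix.isHermitian_add_transpose_self A)).add_right
    (hT _ (sub_mem hA hA') (by rw [Matrix.conjTranspose_sub, Matrix.conjTranspose_conjTranspose,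
      neg_sub]))
  have hA2 : A = (2⁻¹ : ℝ) • ((A + Aᴴ) + (A - Aᴴ)) := by
    rw [add_add_sub_cancel, ← two_smul ℝ A, smul_smul, inv_mul_cancel₀ two_ne_zero, one_smul]
  rw [hA2]
  exact hsum.smul_right _

theorem nonsing_inv_mem {A : Matrix ι ι ℂ} (hA : A ∈ S) (hAh : A.IsHermitian) : A⁻¹ ∈ S := by
  rw [Matrix.nonsing_inv_eq_ringInverse]
  by_cases hu : IsUnit A
  · rw [← cfc_ringInverse_id (R := ℝ) A hu hAh]
    exact cfc_mem (𝕜' := ℝ) _ hA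
  · rw [Ring.inverse_non_unit _ hu]
    exact zero_mem S

theorem negPart_mem {A : Matrix ι ι ℂ} (hA : A ∈ S) : A⁻ ∈ S :=
  cfcₙ_mem (𝕜' := ℝ) _ hA

theorem commute_conjTranspose_of_posSemidef_mul_add {K : Matrix ι ι ℂ}
    (hK : ∀ G ∈ S, G.PosSemidef → (K * G + (K * G)ᴴ).PosSemidef) {H : Matrix ι ι ℂ}
    (hH : H ∈ S) (hHh : H.IsHermitian) : Commute H Kᴴ := by
  refine hHh.commute_of_mapsTo_eigenvectors fun c v hv => ?_
  set D := H - c • (1 : Matrix ι ι ℂ)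
  have hD : D ∈ S := sub_mem hH (S.smul_mem S.one_mem c)
  have hDv : ∀ w, D *ᵥ w = H *ᵥ w - c • w := fun w => by
    rw [Matrix.sub_mulVec, Matrix.smul_mulVec, Matrix.one_mulVec]
  have hG := hK (Dᴴ * D) (mul_mem (star_mem hD) hD) (Matrix.posSemidef_conjTranspose_mul_self D)
  rw [Matrix.conjTranspose_mul, (Matrix.isHermitian_conjTranspose_mul_self D).eq] at hG
  have hGv : (Dᴴ * D) *ᵥ v = 0 := by
    rw [← Matrix.mulVec_mulVec, hDv, hv, sub_self, Matrix.mulVec_zero]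
  have hGKv := (Matrix.isHermitian_conjTranspose_mul_self D).mulVec_conjTranspose_mulVec_eq_zero
    hG hGv
  rw [Matrix.conjTranspose_mul_self_mulVec_eq_zero, hDv] at hGKv
  exact sub_eq_zero.mp hGKv

end StarSubalgebra

def IsRealStarSubalgebra.toStarSubalgebra {n : ℕ} {𝒜 : Set (Mat n)}
    (h𝒜 : IsRealStarSubalgebra 𝒜) : StarSubalgebra ℝ (Mat n) where
  carrier := 𝒜
  add_mem' hA hB := h𝒜.1 _ hA _ hB
  mul_mem' hA hB := h𝒜.2.2.1 _ hA _ hB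
  one_mem' := h𝒜.2.2.2.2
  algebraMap_mem' r := by
    simpa [Algebra.algebraMap_eq_smul_one] using h𝒜.2.1 r 1 h𝒜.2.2.2.2
  star_mem' hA := h𝒜.2.2.2.1 _ hA

section Projection

variable {ι : Type*} [Fintype ι] [DecidableEq ι]

structure IsHSProjection (S : StarSubalgebra ℝ (Matrix ι ι ℂ))
    (P : Matrix ι ι ℂ →ₗ[ℝ] Matrix ι ι ℂ) : Prop where
  mem : ∀ B, P B ∈ S
  orthogonal : ∀ A ∈ S, ∀ B, ((Aᴴ * (B - P B)).trace).re = 0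

namespace IsHSProjection

variable {S : StarSubalgebra ℝ (Matrix ι ι ℂ)} {P : Matrix ι ι ℂ →ₗ[ℝ] Matrix ι ι ℂ}
  (hP : IsHSProjection S P)
include hP

theorem re_trace_mul_apply {A : Matrix ι ι ℂ} (hA : A ∈ S) (B : Matrix ι ι ℂ) :
    ((A * P B).trace).re = ((A * B).trace).re := by
  have h := hP.orthogonal _ (star_mem hA) B
  rw [Matrix.star_eq_conjTranspose, Matrix.conjTranspose_conjTranspose, Matrix.mul_sub,
    Matrix.trace_sub, Complex.sub_re] at h
  linarith

theorem re_trace_apply_mul {A : Matrix ι ι ℂ} (hA : A ∈ S) (B : Matrix ι ι ℂ) :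
    ((P B * A).trace).re = ((B * A).trace).re := by
  rw [Matrix.trace_mul_comm, hP.re_trace_mul_apply hA, Matrix.trace_mul_comm]

theorem re_trace_mul_apply_eq_apply_mul (X Y : Matrix ι ι ℂ) :
    ((X * P Y).trace).re = ((P X * Y).trace).re := by
  rw [Matrix.trace_mul_comm, ← hP.re_trace_mul_apply (hP.mem Y), Matrix.trace_mul_comm,
    hP.re_trace_mul_apply (hP.mem X)]

theorem apply_eq_of_re_trace_mul_sub {X Y : Matrix ι ι ℂ} (hY : Y ∈ S)
    (h : ∀ A ∈ S, ((A * (X - Y)).trace).re = 0) : P X = Y := by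
  have hD : P X - Y ∈ S := sub_mem (hP.mem X) hY
  have hD' : (P X - Y)ᴴ ∈ S := star_mem hD
  rw [← sub_eq_zero]
  refine Matrix.eq_zero_of_re_trace_conjTranspose_mul_self_eq_zero ?_
  have hsplit : P X - Y = (X - Y) - (X - P X) := by abel
  rw [hsplit, Matrix.mul_sub, Matrix.trace_sub, Complex.sub_re, ← hsplit, h _ hD',
    hP.orthogonal _ hD, sub_zero]

theorem apply_of_mem {A : Matrix ι ι ℂ} (hA : A ∈ S) : P A = A :=
  hP.apply_eq_of_re_trace_mul_sub hA fun _ _ => by simp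

theorem map_conjTranspose (X : Matrix ι ι ℂ) : P Xᴴ = (P X)ᴴ := by
  refine hP.apply_eq_of_re_trace_mul_sub (star_mem (hP.mem X)) fun A hA => ?_
  rw [← Matrix.conjTranspose_sub, Matrix.re_trace_mul_conjTranspose]
  exact hP.orthogonal A hA X

theorem map_mul_left {A : Matrix ι ι ℂ} (hA : A ∈ S) (X : Matrix ι ι ℂ) :
    P (A * X) = A * P X := by
  refine hP.apply_eq_of_re_trace_mul_sub (mul_mem hA (hP.mem X)) fun C hC => ?_
  rw [← Matrix.mul_sub, ← Matrix.mul_assoc, Matrix.mul_sub, Matrix.trace_sub, Complex.sub_re,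
    hP.re_trace_mul_apply (mul_mem hC hA), sub_self]

theorem posSemidef_apply {X : Matrix ι ι ℂ} (hX : X.PosSemidef) : (P X).PosSemidef := by
  set Y := P X
  have hY : IsSelfAdjoint Y := by
    change Yᴴ = Y
    rw [← hP.map_conjTranspose, hX.1.eq]
  set N := Y⁻
  have hN : N.PosSemidef := Matrix.nonneg_iff_posSemidef.mp (CFC.negPart_nonneg Y)
  have hNX : 0 ≤ ((N * X).trace).re :=
    (Complex.nonneg_iff.mp (hN.trace_mul_nonneg hX)).1
  have hNY : N * Y = -(Nᴴ * N) := by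
    conv_lhs => rw [← CFC.posPart_sub_negPart Y hY]
    rw [mul_sub, CFC.negPart_mul_posPart, zero_sub, hN.1.eq]
  have hNN : 0 ≤ ((Nᴴ * N).trace).re :=
    (Complex.nonneg_iff.mp (Matrix.posSemidef_conjTranspose_mul_self N).trace_nonneg).1
  rw [← hP.re_trace_mul_apply (StarSubalgebra.negPart_mem (hP.mem X)), hNY, Matrix.trace_neg,
    Complex.neg_re] at hNX
  have hN0 : N = 0 := Matrix.eq_zero_of_re_trace_conjTranspose_mul_self_eq_zero (by linarith)
  exact Matrix.nonneg_iff_posSemidef.mp ((CFC.negPart_eq_zero_iff Y hY).mp hN0)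

theorem posDef_apply {X : Matrix ι ι ℂ} (hX : X.PosDef) : (P X).PosDef := by
  obtain ⟨c, hc, hXc⟩ := hX.exists_pos_posSemidef_sub_smul_one
  have hc1 : P (c • 1) = c • 1 := hP.apply_of_mem (S.smul_mem S.one_mem c)
  have hsplit : P X = P (X - c • 1) + c • 1 := by rw [map_sub, hc1, sub_add_cancel]
  rw [hsplit]
  exact .posSemidef_add (hP.posSemidef_apply hXc) (Matrix.PosDef.one.smul hc)

variable {ρ : Matrix ι ι ℂ} (hρ : ρ.PosDef)
include hρ

theorem nonsing_inv_apply_mem : (P ρ)⁻¹ ∈ S :=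
  StarSubalgebra.nonsing_inv_mem (hP.mem ρ) (hP.posDef_apply hρ).1

theorem conj_apply_mem {A : Matrix ι ι ℂ} (hA : A ∈ S) : P ρ * A * (P ρ)⁻¹ ∈ S :=
  mul_mem (mul_mem (hP.mem ρ) hA) (hP.nonsing_inv_apply_mem hρ)

theorem conj_eq_of_forall_conj_mem (h : ∀ A ∈ S, ρ * A * ρ⁻¹ ∈ S) {A : Matrix ι ι ℂ} (hA : A ∈ S) :
    ρ * A * ρ⁻¹ = P ρ * A * (P ρ)⁻¹ := by
  set σ := P ρ
  have hρu : IsUnit ρ.det := (Matrix.isUnit_iff_isUnit_det ρ).mp hρ.isUnit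
  have hσu : IsUnit σ.det := (Matrix.isUnit_iff_isUnit_det σ).mp (hP.posDef_apply hρ).isUnit
  set Z := ρ * A * ρ⁻¹ - σ * A * σ⁻¹
  have hZ : Z ∈ S := sub_mem (h A hA) (hP.conj_apply_mem hρ hA)
  have hρZ : ∀ B ∈ S, ((ρ * B * (ρ * A * ρ⁻¹)).trace).re = ((ρ * B * (σ * A * σ⁻¹)).trace).re :=
    fun B hB => calc
      _ = ((ρ * (A * B)).trace).re := by rw [Matrix.trace_mul_mul_conj hρu, mul_assoc]
      _ = ((σ * (A * B)).trace).re := (hP.re_trace_apply_mul (mul_mem hA hB) ρ).symm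
      _ = ((σ * B * (σ * A * σ⁻¹)).trace).re := by rw [Matrix.trace_mul_mul_conj hσu, mul_assoc]
      _ = _ := by
        rw [mul_assoc, mul_assoc ρ,
          hP.re_trace_apply_mul (mul_mem hB (hP.conj_apply_mem hρ hA))]
  refine sub_eq_zero.mp (hρ.eq_zero_of_re_trace_mul_conjTranspose_mul_self_eq_zero ?_)
  have hZ' : Zᴴ ∈ S := star_mem hZ
  rw [← mul_assoc, mul_sub, trace_sub, Complex.sub_re, hρZ _ hZ', sub_self]

end IsHSProjection

end Projection

namespace IsHSProjection

variable {n : ℕ} {S : StarSubalgebra ℝ (Mat n)} {P : Mat n →ₗ[ℝ] Mat n}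
  (hP : IsHSProjection S P) {ρ : Mat n} (hρ : ρ.PosDef)
include hP hρ

theorem exists_isRealCondExp_of_commute (h : ∀ A ∈ S, Commute ((P ρ)⁻¹ * ρ) A) :
    ∃ α : Mat n →ₗ[ℝ] Mat n, IsRealCondExp S α ∧
      ∀ B : Mat n, ((ρ * B).trace).re = ((ρ * α B).trace).re := by
  set σ := P ρ
  have hσ : σ.PosDef := hP.posDef_apply hρ
  have hσu : IsUnit σ.det := (Matrix.isUnit_iff_isUnit_det σ).mp hσ.isUnit
  have hσρ : Commute σ⁻¹ ρ := calc
    σ⁻¹ * ρ = σ⁻¹ * ρ * σ * σ⁻¹ := (mul_nonsing_inv_cancel_right _ _ hσu).symm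
    _ = σ * (σ⁻¹ * ρ) * σ⁻¹ := by rw [(h σ (hP.mem ρ)).eq]
    _ = ρ * σ⁻¹ := by rw [mul_nonsing_inv_cancel_left _ _ hσu]
  set w := CFC.sqrt (σ⁻¹ * ρ)
  have hw : wᴴ = w := (CFC.sqrt_nonneg _).isSelfAdjoint
  have hwS : ∀ A ∈ S, Commute w A := fun A hA => by
    rw [show w = cfc NNReal.sqrt (σ⁻¹ * ρ) from CFC.sqrt_eq_cfc]
    exact (h A hA).cfc_nnreal _
  have hwσw : w * σ * w = ρ := by
    rw [(hwS σ (hP.mem ρ)).eq, mul_assoc,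
      CFC.sqrt_mul_sqrt_self _ (hσρ.mul_nonneg hσ.inv.posSemidef.nonneg hρ.posSemidef.nonneg),
      mul_nonsing_inv_cancel_left _ _ hσu]
  refine ⟨P ∘ₗ LinearMap.mulLeft ℝ w ∘ₗ LinearMap.mulRight ℝ w,
    ⟨fun B hB => ?_, fun B => hP.mem _, fun A hA B => ?_⟩, fun B => ?_⟩
  · refine hP.posSemidef_apply ?_
    simpa [hw, mul_assoc] using hB.conjTranspose_mul_mul_same w
  · change P (w * (A * B * w)) = A * P (w * (B * w))
    rw [← hP.map_mul_left hA]
    simp only [← mul_assoc]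
    rw [(hwS A hA).eq]
  · change _ = ((ρ * P (w * (B * w))).trace).re
    rw [hP.re_trace_mul_apply_eq_apply_mul]
    calc ((ρ * B).trace).re = ((w * (σ * w * B)).trace).re := by
          rw [← hwσw]; simp only [mul_assoc]
      _ = ((σ * (w * (B * w))).trace).re := by
          rw [trace_mul_comm]; simp only [mul_assoc]

theorem re_trace_mul_condExp_apply {α : Mat n →ₗ[ℝ] Mat n} (hα : IsRealCondExp S α)
    (hαρ : ∀ B : Mat n, ((ρ * B).trace).re = ((ρ * α B).trace).re) {G : Mat n} (hG : G ∈ S)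
    (B : Mat n) : ((G * α B).trace).re = ((ρ * (P ρ)⁻¹ * G * B).trace).re := by
  set σ := P ρ
  have hσu : IsUnit σ.det := (Matrix.isUnit_iff_isUnit_det σ).mp (hP.posDef_apply hρ).isUnit
  have hσG : σ⁻¹ * G ∈ S := mul_mem (hP.nonsing_inv_apply_mem hρ) hG
  calc ((G * α B).trace).re = ((σ * (σ⁻¹ * G * α B)).trace).re := by
        rw [mul_assoc σ⁻¹, mul_nonsing_inv_cancel_left _ _ hσu]
    _ = ((ρ * (σ⁻¹ * G * α B)).trace).re := hP.re_trace_apply_mul (mul_mem hσG (hα.2.1 B)) ρ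
    _ = ((ρ * (σ⁻¹ * G * B)).trace).re := by rw [← hα.2.2 _ hσG, ← hαρ]
    _ = ((ρ * σ⁻¹ * G * B).trace).re := by simp only [mul_assoc]

theorem commute_of_isRealCondExp {α : Mat n →ₗ[ℝ] Mat n} (hα : IsRealCondExp S α)
    (hαρ : ∀ B : Mat n, ((ρ * B).trace).re = ((ρ * α B).trace).re) {A : Mat n} (hA : A ∈ S) :
    Commute ((P ρ)⁻¹ * ρ) A := by
  set σ := P ρ
  have hσ : σ.PosDef := hP.posDef_apply hρ
  have hσu : IsUnit σ.det := (Matrix.isUnit_iff_isUnit_det σ).mp hσ.isUnit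
  set K := ρ * σ⁻¹
  have hKH : Kᴴ = σ⁻¹ * ρ := by
    rw [conjTranspose_mul, conjTranspose_nonsing_inv, hσ.1.eq, hρ.1.eq]
  have hpos : ∀ G ∈ S, G.PosSemidef → (K * G + (K * G)ᴴ).PosSemidef := fun G hG hGpsd =>
    posSemidef_add_conjTranspose_of_re_trace_mul_nonneg fun B hB => by
      rw [← hP.re_trace_mul_condExp_apply hρ hα hαρ hG B]
      exact (Complex.nonneg_iff.mp (hGpsd.trace_mul_nonneg (hα.1 B hB))).1
  have hherm : ∀ H ∈ S, H.IsHermitian → Commute H Kᴴ :=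
    fun H hH hHh => StarSubalgebra.commute_conjTranspose_of_posSemidef_mul_add hpos hH hHh
  have hK : Kᴴ = K := calc
    Kᴴ = Kᴴ * σ * σ⁻¹ := (mul_nonsing_inv_cancel_right _ _ hσu).symm
    _ = σ * (σ⁻¹ * ρ) * σ⁻¹ := by rw [← (hherm σ (hP.mem ρ) hσ.1).eq, hKH]
    _ = K := by rw [mul_nonsing_inv_cancel_left _ _ hσu]
  rw [← hKH, hK]
  refine StarSubalgebra.commute_of_commute_isHermitian_of_commute_skew
    (fun H hH hHh => ?_) (fun T hT hTs => ?_) hA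
  · rw [← hK]
    exact (hherm H hH hHh).symm
  · have h := add_conjTranspose_eq_zero_of_re_trace_mul_eq_zero fun B hB => by
      rw [← hP.re_trace_mul_condExp_apply hρ hα hαρ hT B]
      exact re_trace_mul_eq_zero_of_conjTranspose_eq_neg hTs (hα.1 B hB).1
    rwa [conjTranspose_mul, hTs, hK, neg_mul, ← sub_eq_add_neg, sub_eq_zero] at h

end IsHSProjection

/-- For a positive definite `ρ` and a real `*`-subalgebra `𝒜` with
orthogonal projection `P` (w.r.t. the real Hilbert–Schmidt inner product) and `ρ₀ = P ρ`,
the following are equivalent: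
(i) there is a real conditional expectation `α` onto `𝒜` with
    `Re Tr(ρ B) = Re Tr(ρ α(B))` for all `B`;
(ii) `ρ₀` is positive definite and `ρ A ρ⁻¹ = ρ₀ A ρ₀⁻¹` for every `A ∈ 𝒜`;
(iii) `ρ A ρ⁻¹ ∈ 𝒜` for every `A ∈ 𝒜`. -/
theorem stmt5 {n : ℕ} (ρ : Mat n) (hρ : ρ.PosDef)
    (𝒜 : Set (Mat n)) (h𝒜 : IsRealStarSubalgebra 𝒜)
    (P : Mat n →ₗ[ℝ] Mat n)
    (hPmem : ∀ B : Mat n, P B ∈ 𝒜)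
    (hPorth : ∀ A ∈ 𝒜, ∀ B : Mat n, ((Aᴴ * (B - P B)).trace).re = 0) :
    ((∃ α : Mat n →ₗ[ℝ] Mat n, IsRealCondExp 𝒜 α ∧
        ∀ B : Mat n, ((ρ * B).trace).re = ((ρ * α B).trace).re) ↔
      ((P ρ).PosDef ∧ ∀ A ∈ 𝒜, ρ * A * ρ⁻¹ = (P ρ) * A * (P ρ)⁻¹)) ∧
    (((P ρ).PosDef ∧ ∀ A ∈ 𝒜, ρ * A * ρ⁻¹ = (P ρ) * A * (P ρ)⁻¹) ↔
      (∀ A ∈ 𝒜, ρ * A * ρ⁻¹ ∈ 𝒜)) := by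
  obtain ⟨S, rfl⟩ : ∃ S : StarSubalgebra ℝ (Mat n), (S : Set (Mat n)) = 𝒜 :=
    ⟨h𝒜.toStarSubalgebra, rfl⟩
  have hP : IsHSProjection S P := ⟨hPmem, hPorth⟩
  have hρ₀ : (P ρ).PosDef := hP.posDef_apply hρ
  have hconj : ∀ A, ρ * A * ρ⁻¹ = P ρ * A * (P ρ)⁻¹ ↔ Commute ((P ρ)⁻¹ * ρ) A := fun A =>
    mul_mul_nonsing_inv_eq_iff_commute ((isUnit_iff_isUnit_det ρ).mp hρ.isUnit)
      ((isUnit_iff_isUnit_det _).mp hρ₀.isUnit)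
  refine ⟨⟨?_, ?_⟩, ⟨?_, ?_⟩⟩
  · rintro ⟨α, hα, hαρ⟩
    exact ⟨hρ₀, fun A hA => (hconj A).mpr (hP.commute_of_isRealCondExp hρ hα hαρ hA)⟩
  · rintro ⟨-, h⟩
    exact hP.exists_isRealCondExp_of_commute hρ fun A hA => (hconj A).mp (h A hA)
  · rintro ⟨-, h⟩ A hA
    exact h A hA ▸ hP.conj_apply_mem hρ hA
  · exact fun h => ⟨hρ₀, fun A hA => hP.conj_eq_of_forall_conj_mem hρ h hA⟩
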